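/- arXiv:1711.07529 — 4 statements merged into one kernel-verified Lean document; each statement's English description precedes it below -/
import Mathlib

section
/- Let u₁, y₁, u₂, y₂ be signals in L²([t0,t1]) and set Δu = u₁ − u₂, Δy = y₁ − y₂, with ∫‖Δu‖² ≤ ε_u and ∫‖Δy‖² ≤ ε_y. Suppose matrices Q₁,Q₂,R₁,R₂ symmetric and S₁ = S₂ satisfy λ_min(Q₁−Q₂) − ζ₁‖Q₁‖₂² − ζ₃ ≥ 0 and λ_min(R₁−R₂) − ζ₂‖S₁‖₂² − ζ₄‖R₁‖₂² ≥ 0 for some positive constants ζ₁,ζ₂,ζ₃,ζ₄. Then the supply-rate integral r₁ = ∫ (y₁ᵀQ₁y₁ + 2y₁ᵀS₁u₁ + u₁ᵀR₁u₁) dt satisfies r₁ ≥ r₂ − β, where r₂ = ∫ (y₂ᵀQ₂y₂ + 2y₂ᵀS₂u₂ + u₂ᵀR₂u₂) dt and β = ε_y/ζ₁ + ε_y/ζ₂ + (ε_u/ζ₃)‖S₁‖₂² + ε_u/ζ₄ + max{0, λ_max(−Q₁)}ε_y + max{0, λ_max(−R₁)}ε_u + max{0, −2∫Δyᵀ S₁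 Δu dt}. -/
open MeasureTheory Matrix

/-- Induced 2-norm (largest singular value) of a real matrix. -/
noncomputable def l2OpNorm {p q : ℕ} (Q : Matrix (Fin p) (Fin q) ℝ) : ℝ :=
  ‖(Matrix.toEuclideanLin Q).toContinuousLinearMap‖

/-- Smallest eigenvalue of a real symmetric matrix. -/
noncomputable def eigMin {m : ℕ} {A : Matrix (Fin m) (Fin m) ℝ} (hA : A.IsHermitian) : ℝ :=
  ⨅ i, hA.eigenvalues i

/-- Largest eigenvalue of a real symmetric matrix. -/
noncomputable def eigMax {m : ℕ} {A : Matrix (Fin m) (Fin m) ℝ} (hA : A.IsHermitian) : ℝ :=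
  ⨆ i, hA.eigenvalues i

lemma norm_equiv_symm {n : ℕ} (v : Fin n → ℝ) :
    ‖(WithLp.equiv 2 (Fin n → ℝ)).symm v‖ ^ 2 = v ⬝ᵥ v := by
  rw [EuclideanSpace.norm_eq, Real.sq_sqrt (by positivity)]
  simp [dotProduct, sq]

lemma dp_self_nonneg {n : ℕ} (v : Fin n → ℝ) : 0 ≤ v ⬝ᵥ v := by
  simpa using (norm_equiv_symm v) ▸ sq_nonneg _

lemma l2OpNorm_nonneg {p q : ℕ} (S : Matrix (Fin p) (Fin q) ℝ) : 0 ≤ l2OpNorm S :=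
  norm_nonneg _

lemma cauchy {p q : ℕ} (S : Matrix (Fin p) (Fin q) ℝ) (y : Fin p → ℝ) (u : Fin q → ℝ) :
    y ⬝ᵥ S.mulVec u ≤ l2OpNorm S * (Real.sqrt (y ⬝ᵥ y) * Real.sqrt (u ⬝ᵥ u)) := by
  have h1 : y ⬝ᵥ S.mulVec u =
      inner ℝ ((WithLp.equiv 2 (Fin p → ℝ)).symm y)
        ((Matrix.toEuclideanLin S).toContinuousLinearMap ((WithLp.equiv 2 (Fin q → ℝ)).symm u)) := by
    simp only [LinearMap.coe_toContinuousLinearMap', WithLp.equiv_symm_apply, toEuclideanLin_apply_piLp_toLp]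
    rw [PiLp.inner_apply]
    simp [dotProduct, mul_comm]
  rw [h1]
  calc _ ≤ ‖(WithLp.equiv 2 (Fin p → ℝ)).symm y‖ *
        ‖(Matrix.toEuclideanLin S).toContinuousLinearMap ((WithLp.equiv 2 (Fin q → ℝ)).symm u)‖ :=
      real_inner_le_norm _ _
    _ ≤ ‖(WithLp.equiv 2 (Fin p → ℝ)).symm y‖ * (l2OpNorm S * ‖(WithLp.equiv 2 (Fin q → ℝ)).symm u‖) := by
      gcongr
      exact ContinuousLinearMap.le_opNorm _ _
    _ = l2OpNorm S * (‖(WithLp.equiv 2 (Fin p → ℝ)).symm y‖ * ‖(WithLp.equiv 2 (Fin q → ℝ)).symm u‖) := by ring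
    _ = _ := by
      congr 2
      · rw [← Real.sqrt_sq (norm_nonneg _), norm_equiv_symm]
      · rw [← Real.sqrt_sq (norm_nonneg _), norm_equiv_symm]

lemma quad_eq {n : ℕ} {A : Matrix (Fin n) (Fin n) ℝ} (hA : A.IsHermitian) (x : Fin n → ℝ) :
    x ⬝ᵥ A.mulVec x =
      ∑ i, hA.eigenvalues i * ((star (hA.eigenvectorUnitary : Matrix (Fin n) (Fin n) ℝ) *ᵥ x) i)^2 := by
  set U : Matrix (Fin n) (Fin n) ℝ := (hA.eigenvectorUnitary : Matrix (Fin n) (Fin n) ℝ) with hU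
  set v : Fin n → ℝ := star U *ᵥ x with hv
  have hsU : star U = Uᵀ := by
    rw [Matrix.star_eq_conjTranspose, Matrix.conjTranspose_eq_transpose_of_trivial]
  have hvm : x ᵥ* U = v := by rw [hv, hsU, Matrix.mulVec_transpose]
  conv_lhs => rw [hA.spectral_theorem, Unitary.conjStarAlgAut_apply]
  rw [← Matrix.mulVec_mulVec, ← Matrix.mulVec_mulVec, Matrix.dotProduct_mulVec, hvm]
  have hdiag : (diagonal (RCLike.ofReal ∘ hA.eigenvalues) : Matrix (Fin n) (Fin n) ℝ) *ᵥ v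
      = fun i => hA.eigenvalues i * v i := by
    funext i
    simp [Matrix.mulVec_diagonal]
  rw [hdiag, dotProduct]
  congr 1; funext i; ring

lemma dp_invariant {n : ℕ} {A : Matrix (Fin n) (Fin n) ℝ} (hA : A.IsHermitian) (x : Fin n → ℝ) :
    (star (hA.eigenvectorUnitary : Matrix (Fin n) (Fin n) ℝ) *ᵥ x) ⬝ᵥ
      (star (hA.eigenvectorUnitary : Matrix (Fin n) (Fin n) ℝ) *ᵥ x) = x ⬝ᵥ x := by
  set U : Matrix (Fin n) (Fin n) ℝ := (hA.eigenvectorUnitary : Matrix (Fin n) (Fin n) ℝ) with hU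
  have hsU : star U = Uᵀ := by
    rw [Matrix.star_eq_conjTranspose, Matrix.conjTranspose_eq_transpose_of_trivial]
  have hvm : x ᵥ* U = star U *ᵥ x := by rw [hsU, Matrix.mulVec_transpose]
  rw [← hvm, ← Matrix.dotProduct_mulVec, hvm, Matrix.mulVec_mulVec]
  have : U * star U = 1 := Unitary.coe_mul_star_self hA.eigenvectorUnitary
  rw [this, Matrix.one_mulVec]

lemma quad_ge {n : ℕ} {A : Matrix (Fin n) (Fin n) ℝ} (hA : A.IsHermitian) (x : Fin n → ℝ) :
    eigMin hA * (x ⬝ᵥ x) ≤ x ⬝ᵥ A.mulVec x := by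
  rw [quad_eq hA x, ← dp_invariant hA x]
  set v : Fin n → ℝ := star (hA.eigenvectorUnitary : Matrix (Fin n) (Fin n) ℝ) *ᵥ x
  rw [dotProduct, Finset.mul_sum]
  apply Finset.sum_le_sum
  intro i _
  have h1 : eigMin hA ≤ hA.eigenvalues i := ciInf_le (Finite.bddBelow_range _) i
  have := mul_le_mul_of_nonneg_right h1 (sq_nonneg (v i))
  nlinarith [sq_nonneg (v i)]

lemma quad_le {n : ℕ} {A : Matrix (Fin n) (Fin n) ℝ} (hA : A.IsHermitian) (x : Fin n → ℝ) :
    x ⬝ᵥ A.mulVec x ≤ eigMax hA * (x ⬝ᵥ x) := by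
  rw [quad_eq hA x, ← dp_invariant hA x]
  set v : Fin n → ℝ := star (hA.eigenvectorUnitary : Matrix (Fin n) (Fin n) ℝ) *ᵥ x
  rw [dotProduct, Finset.mul_sum]
  apply Finset.sum_le_sum
  intro i _
  have h1 : hA.eigenvalues i ≤ eigMax hA := le_ciSup (Finite.bddAbove_range _) i
  have := mul_le_mul_of_nonneg_right h1 (sq_nonneg (v i))
  nlinarith [sq_nonneg (v i)]

lemma dp_symm {n : ℕ} {A : Matrix (Fin n) (Fin n) ℝ} (hA : A.IsHermitian) (x y : Fin n → ℝ) :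
    x ⬝ᵥ A.mulVec y = y ⬝ᵥ A.mulVec x := by
  have hAt : Aᵀ = A := by
    rw [← Matrix.conjTranspose_eq_transpose_of_trivial]; exact hA
  rw [Matrix.dotProduct_mulVec, ← Matrix.mulVec_transpose, hAt, dotProduct_comm]

lemma young (a b ζ : ℝ) (hζ : 0 < ζ) : 2*(a*b) ≤ ζ*a^2 + b^2/ζ := by
  have h := sq_nonneg (ζ*a - b)
  have h2 : 0 ≤ (ζ*a - b)^2 / ζ := div_nonneg h hζ.le
  have : (ζ*a - b)^2 / ζ = ζ*a^2 - 2*(a*b) + b^2/ζ := by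
    field_simp; ring
  linarith [this ▸ h2]

lemma young_dp {x c sA sB ζ A B : ℝ} (hζ : 0 < ζ)
    (hA : sA^2 = A) (hB : sB^2 = B) (h : x ≤ c*(sA*sB)) :
    2*x ≤ ζ*c^2*A + B/ζ := by
  have hy := young (c*sA) sB ζ hζ
  have h2 : ζ*(c*sA)^2 + sB^2/ζ = ζ*c^2*A + B/ζ := by rw [mul_pow, hA, hB]; ring
  have h3 : 2*x ≤ 2*((c*sA)*sB) := by linarith [h]
  linarith [h2 ▸ hy]

lemma young_dp' {x c sA sB ζ A B : ℝ} (hζ : 0 < ζ)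
    (hA : sA^2 = A) (hB : sB^2 = B) (h : x ≤ c*(sA*sB)) :
    2*x ≤ ζ*A + c^2*B/ζ := by
  have hy := young sA (c*sB) ζ hζ
  have h2 : ζ*sA^2 + (c*sB)^2/ζ = ζ*A + c^2*B/ζ := by rw [mul_pow, hA, hB]
  have h3 : 2*x ≤ 2*(sA*(c*sB)) := by linarith [h]
  linarith [h2 ▸ hy]

set_option maxHeartbeats 1000000 in
lemma pointwise_bound {p m : ℕ} {ζ1 ζ2 ζ3 ζ4 : ℝ}
    (hζ1 : 0 < ζ1) (hζ2 : 0 < ζ2) (hζ3 : 0 < ζ3) (hζ4 : 0 < ζ4)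
    (a1 a2 : Fin m → ℝ) (b1 b2 : Fin p → ℝ)
    {Q1 Q2 : Matrix (Fin p) (Fin p) ℝ} (S1 : Matrix (Fin p) (Fin m) ℝ)
    {R1 R2 : Matrix (Fin m) (Fin m) ℝ}
    (hQ1 : Q1.IsHermitian) (hQ2 : Q2.IsHermitian)
    (hR1 : R1.IsHermitian) (hR2 : R2.IsHermitian)
    (hQcond : eigMin (hQ1.sub hQ2) - ζ1 * l2OpNorm Q1 ^ 2 - ζ3 ≥ 0)
    (hRcond : eigMin (hR1.sub hR2) - ζ2 * l2OpNorm S1 ^ 2 - ζ4 * l2OpNorm R1 ^ 2 ≥ 0) :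
    (b2 ⬝ᵥ Q2.mulVec b2 + 2 * (b2 ⬝ᵥ S1.mulVec a2) + a2 ⬝ᵥ R2.mulVec a2)
      - (b1 ⬝ᵥ Q1.mulVec b1 + 2 * (b1 ⬝ᵥ S1.mulVec a1) + a1 ⬝ᵥ R1.mulVec a1)
    ≤ (1/ζ1 + 1/ζ2 + max 0 (eigMax hQ1.neg)) * ((b2 - b1) ⬝ᵥ (b2 - b1))
      + ((1/ζ3) * l2OpNorm S1 ^ 2 + 1/ζ4 + max 0 (eigMax hR1.neg)) * ((a2 - a1) ⬝ᵥ (a2 - a1))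
      - 2 * ((b2 - b1) ⬝ᵥ S1.mulVec (a2 - a1)) := by
  set dy : Fin p → ℝ := b2 - b1 with hdy
  set du : Fin m → ℝ := a2 - a1 with hdu
  have hb1 : b1 = b2 - dy := by rw [hdy]; abel
  have ha1 : a1 = a2 - du := by rw [hdu]; abel
  rw [hb1, ha1]
  -- expand everything
  have hid : (b2 ⬝ᵥ Q2.mulVec b2 + 2 * (b2 ⬝ᵥ S1.mulVec a2) + a2 ⬝ᵥ R2.mulVec a2)
      - ((b2 - dy) ⬝ᵥ Q1.mulVec (b2 - dy) + 2 * ((b2 - dy) ⬝ᵥ S1.mulVec (a2 - du))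
        + (a2 - du) ⬝ᵥ R1.mulVec (a2 - du))
    = (b2 ⬝ᵥ Q2.mulVec b2 - b2 ⬝ᵥ Q1.mulVec b2) + (b2 ⬝ᵥ Q1.mulVec dy + dy ⬝ᵥ Q1.mulVec b2)
      - dy ⬝ᵥ Q1.mulVec dy
      + 2 * (b2 ⬝ᵥ S1.mulVec du) + 2 * (dy ⬝ᵥ S1.mulVec a2) - 2 * (dy ⬝ᵥ S1.mulVec du)
      + (a2 ⬝ᵥ R2.mulVec a2 - a2 ⬝ᵥ R1.mulVec a2) + (a2 ⬝ᵥ R1.mulVec du + du ⬝ᵥ R1.mulVec a2)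
      - du ⬝ᵥ R1.mulVec du := by
    simp only [Matrix.mulVec_sub, sub_dotProduct, dotProduct_sub]
    ring
  rw [hid, dp_symm hQ1 dy b2, dp_symm hR1 du a2]
  have hBy : 0 ≤ b2 ⬝ᵥ b2 := dp_self_nonneg _
  have hBu : 0 ≤ a2 ⬝ᵥ a2 := dp_self_nonneg _
  have hDy : 0 ≤ dy ⬝ᵥ dy := dp_self_nonneg _
  have hDu : 0 ≤ du ⬝ᵥ du := dp_self_nonneg _
  have sb2 := Real.sq_sqrt hBy
  have sa2 := Real.sq_sqrt hBu
  have sdy := Real.sq_sqrt hDy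
  have sdu := Real.sq_sqrt hDu
  have sqb2 := Real.sqrt_nonneg (b2 ⬝ᵥ b2)
  have sqa2 := Real.sqrt_nonneg (a2 ⬝ᵥ a2)
  have sqdy := Real.sqrt_nonneg (dy ⬝ᵥ dy)
  have sqdu := Real.sqrt_nonneg (du ⬝ᵥ du)
  -- T1 : Q difference term
  have hQg : eigMin (hQ1.sub hQ2) * (b2 ⬝ᵥ b2) ≤ b2 ⬝ᵥ Q1.mulVec b2 - b2 ⬝ᵥ Q2.mulVec b2 := by
    have := quad_ge (hQ1.sub hQ2) b2
    simpa [Matrix.sub_mulVec, dotProduct_sub] using this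
  have hQc : ζ1 * l2OpNorm Q1^2 * (b2 ⬝ᵥ b2) + ζ3 * (b2 ⬝ᵥ b2) ≤ eigMin (hQ1.sub hQ2) * (b2 ⬝ᵥ b2) := by
    have := mul_le_mul_of_nonneg_right (show ζ1 * l2OpNorm Q1^2 + ζ3 ≤ eigMin (hQ1.sub hQ2) by linarith) hBy
    linarith [this, (by ring : (ζ1 * l2OpNorm Q1^2 + ζ3) * (b2 ⬝ᵥ b2) = ζ1 * l2OpNorm Q1^2 * (b2 ⬝ᵥ b2) + ζ3 * (b2 ⬝ᵥ b2))]
  -- T7 : R difference term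
  have hRg : eigMin (hR1.sub hR2) * (a2 ⬝ᵥ a2) ≤ a2 ⬝ᵥ R1.mulVec a2 - a2 ⬝ᵥ R2.mulVec a2 := by
    have := quad_ge (hR1.sub hR2) a2
    simpa [Matrix.sub_mulVec, dotProduct_sub] using this
  have hRc : ζ2 * l2OpNorm S1^2 * (a2 ⬝ᵥ a2) + ζ4 * l2OpNorm R1^2 * (a2 ⬝ᵥ a2) ≤ eigMin (hR1.sub hR2) * (a2 ⬝ᵥ a2) := by
    have := mul_le_mul_of_nonneg_right (show ζ2 * l2OpNorm S1^2 + ζ4 * l2OpNorm R1^2 ≤ eigMin (hR1.sub hR2) by linarith) hBu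
    linarith [this, (by ring : (ζ2 * l2OpNorm S1^2 + ζ4 * l2OpNorm R1^2) * (a2 ⬝ᵥ a2) = ζ2 * l2OpNorm S1^2 * (a2 ⬝ᵥ a2) + ζ4 * l2OpNorm R1^2 * (a2 ⬝ᵥ a2))]
  -- T2 : 2 b2 Q1 dy
  have hT2 : 2 * (b2 ⬝ᵥ Q1.mulVec dy) ≤ ζ1 * l2OpNorm Q1^2 * (b2 ⬝ᵥ b2) + (dy ⬝ᵥ dy) / ζ1 :=
    young_dp hζ1 sb2 sdy (cauchy Q1 b2 dy)
  -- T4 : 2 b2 S1 du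
  have hT4 : 2 * (b2 ⬝ᵥ S1.mulVec du) ≤ ζ3 * (b2 ⬝ᵥ b2) + l2OpNorm S1^2 * (du ⬝ᵥ du) / ζ3 :=
    young_dp' hζ3 sb2 sdu (cauchy S1 b2 du)
  -- T5 : 2 dy S1 a2
  have hT5 : 2 * (dy ⬝ᵥ S1.mulVec a2) ≤ ζ2 * l2OpNorm S1^2 * (a2 ⬝ᵥ a2) + (dy ⬝ᵥ dy) / ζ2 := by
    have hc : dy ⬝ᵥ S1.mulVec a2 ≤ l2OpNorm S1 * (Real.sqrt (a2 ⬝ᵥ a2) * Real.sqrt (dy ⬝ᵥ dy)) := by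
      have h0 := cauchy S1 dy a2; linarith [h0]
    exact young_dp hζ2 sa2 sdy hc
  -- T8 : 2 a2 R1 du
  have hT8 : 2 * (a2 ⬝ᵥ R1.mulVec du) ≤ ζ4 * l2OpNorm R1^2 * (a2 ⬝ᵥ a2) + (du ⬝ᵥ du) / ζ4 :=
    young_dp hζ4 sa2 sdu (cauchy R1 a2 du)
  -- T3 : -dy Q1 dy
  have hT3 : -(dy ⬝ᵥ Q1.mulVec dy) ≤ max 0 (eigMax hQ1.neg) * (dy ⬝ᵥ dy) := by
    have h := quad_le hQ1.neg dy
    rw [Matrix.neg_mulVec, dotProduct_neg] at h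
    have h2 : eigMax hQ1.neg * (dy ⬝ᵥ dy) ≤ max 0 (eigMax hQ1.neg) * (dy ⬝ᵥ dy) :=
      mul_le_mul_of_nonneg_right (le_max_right _ _) hDy
    linarith
  -- T9 : -du R1 du
  have hT9 : -(du ⬝ᵥ R1.mulVec du) ≤ max 0 (eigMax hR1.neg) * (du ⬝ᵥ du) := by
    have h := quad_le hR1.neg du
    rw [Matrix.neg_mulVec, dotProduct_neg] at h
    have h2 : eigMax hR1.neg * (du ⬝ᵥ du) ≤ max 0 (eigMax hR1.neg) * (du ⬝ᵥ du) :=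
      mul_le_mul_of_nonneg_right (le_max_right _ _) hDu
    linarith
  have heq : (1/ζ1 + 1/ζ2 + max 0 (eigMax hQ1.neg)) * (dy ⬝ᵥ dy)
      + ((1/ζ3) * l2OpNorm S1^2 + 1/ζ4 + max 0 (eigMax hR1.neg)) * (du ⬝ᵥ du)
      - 2 * (dy ⬝ᵥ S1.mulVec du)
    = (dy ⬝ᵥ dy) / ζ1 + (dy ⬝ᵥ dy) / ζ2 + max 0 (eigMax hQ1.neg) * (dy ⬝ᵥ dy)
      + l2OpNorm S1^2 * (du ⬝ᵥ du) / ζ3 + (du ⬝ᵥ du) / ζ4 + max 0 (eigMax hR1.neg) * (du ⬝ᵥ du)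
      - 2 * (dy ⬝ᵥ S1.mulVec du) := by ring
  rw [heq]
  linarith

set_option maxHeartbeats 1000000 in
theorem stmt2 {p m : ℕ} (t0 t1 εu εy ζ1 ζ2 ζ3 ζ4 : ℝ) (ht : t0 ≤ t1)
    (hζ1 : 0 < ζ1) (hζ2 : 0 < ζ2) (hζ3 : 0 < ζ3) (hζ4 : 0 < ζ4)
    (u1 u2 : ℝ → Fin m → ℝ) (y1 y2 : ℝ → Fin p → ℝ)
    (Q1 Q2 : Matrix (Fin p) (Fin p) ℝ) (S1 : Matrix (Fin p) (Fin m) ℝ)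
    (R1 R2 : Matrix (Fin m) (Fin m) ℝ)
    (hQ1 : Q1.IsHermitian) (hQ2 : Q2.IsHermitian)
    (hR1 : R1.IsHermitian) (hR2 : R2.IsHermitian)
    -- integrated mismatch bounds
    (hu : (∫ t in t0..t1, (u2 t - u1 t) ⬝ᵥ (u2 t - u1 t)) ≤ εu)
    (hy : (∫ t in t0..t1, (y2 t - y1 t) ⬝ᵥ (y2 t - y1 t)) ≤ εy)
    -- integrability of all relevant integrands
    (hi1 : IntervalIntegrable
      (fun t => y1 t ⬝ᵥ Q1.mulVec (y1 t) + 2 * (y1 t ⬝ᵥ S1.mulVec (u1 t)) +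
        u1 t ⬝ᵥ R1.mulVec (u1 t)) volume t0 t1)
    (hi2 : IntervalIntegrable
      (fun t => y2 t ⬝ᵥ Q2.mulVec (y2 t) + 2 * (y2 t ⬝ᵥ S1.mulVec (u2 t)) +
        u2 t ⬝ᵥ R2.mulVec (u2 t)) volume t0 t1)
    (hi3 : IntervalIntegrable (fun t => (u2 t - u1 t) ⬝ᵥ (u2 t - u1 t)) volume t0 t1)
    (hi4 : IntervalIntegrable (fun t => (y2 t - y1 t) ⬝ᵥ (y2 t - y1 t)) volume t0 t1)
    (hi5 : IntervalIntegrable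
      (fun t => (y2 t - y1 t) ⬝ᵥ S1.mulVec (u2 t - u1 t)) volume t0 t1)
    (hi6 : IntervalIntegrable (fun t => y2 t ⬝ᵥ y2 t) volume t0 t1)
    (hi7 : IntervalIntegrable (fun t => u2 t ⬝ᵥ u2 t) volume t0 t1)
    -- eigenvalue conditions
    (hQcond : eigMin (hQ1.sub hQ2) - ζ1 * l2OpNorm Q1 ^ 2 - ζ3 ≥ 0)
    (hRcond : eigMin (hR1.sub hR2) - ζ2 * l2OpNorm S1 ^ 2 - ζ4 * l2OpNorm R1 ^ 2 ≥ 0) :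
    (∫ t in t0..t1, y1 t ⬝ᵥ Q1.mulVec (y1 t) + 2 * (y1 t ⬝ᵥ S1.mulVec (u1 t)) +
        u1 t ⬝ᵥ R1.mulVec (u1 t)) ≥
      (∫ t in t0..t1, y2 t ⬝ᵥ Q2.mulVec (y2 t) + 2 * (y2 t ⬝ᵥ S1.mulVec (u2 t)) +
        u2 t ⬝ᵥ R2.mulVec (u2 t)) -
      (εy / ζ1 + εy / ζ2 + (εu / ζ3) * l2OpNorm S1 ^ 2 + εu / ζ4 +
        max 0 (eigMax hQ1.neg) * εy + max 0 (eigMax hR1.neg) * εu +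
        max 0 (-(2 * ∫ t in t0..t1, (y2 t - y1 t) ⬝ᵥ S1.mulVec (u2 t - u1 t)))) := by
  have hmQ : (0:ℝ) ≤ max 0 (eigMax hQ1.neg) := le_max_left _ _
  have hmR : (0:ℝ) ≤ max 0 (eigMax hR1.neg) := le_max_left _ _
  have hIy0 : (0:ℝ) ≤ ∫ t in t0..t1, (y2 t - y1 t) ⬝ᵥ (y2 t - y1 t) :=
    intervalIntegral.integral_nonneg ht (fun t _ => dp_self_nonneg _)
  have hIu0 : (0:ℝ) ≤ ∫ t in t0..t1, (u2 t - u1 t) ⬝ᵥ (u2 t - u1 t) :=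
    intervalIntegral.integral_nonneg ht (fun t _ => dp_self_nonneg _)
  set Iy := ∫ t in t0..t1, (y2 t - y1 t) ⬝ᵥ (y2 t - y1 t) with hIy
  set Iu := ∫ t in t0..t1, (u2 t - u1 t) ⬝ᵥ (u2 t - u1 t) with hIu
  set I5 := ∫ t in t0..t1, (y2 t - y1 t) ⬝ᵥ S1.mulVec (u2 t - u1 t) with hI5
  -- integrability of the dominating function
  have hG : IntervalIntegrable (fun t =>
      (1/ζ1 + 1/ζ2 + max 0 (eigMax hQ1.neg)) * ((y2 t - y1 t) ⬝ᵥ (y2 t - y1 t))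
      + ((1/ζ3) * l2OpNorm S1 ^ 2 + 1/ζ4 + max 0 (eigMax hR1.neg)) * ((u2 t - u1 t) ⬝ᵥ (u2 t - u1 t))
      - 2 * ((y2 t - y1 t) ⬝ᵥ S1.mulVec (u2 t - u1 t))) volume t0 t1 :=
    ((hi4.const_mul _).add (hi3.const_mul _)).sub (hi5.const_mul 2)
  have hmono : (∫ t in t0..t1,
      ((y2 t ⬝ᵥ Q2.mulVec (y2 t) + 2 * (y2 t ⬝ᵥ S1.mulVec (u2 t)) + u2 t ⬝ᵥ R2.mulVec (u2 t))
      - (y1 t ⬝ᵥ Q1.mulVec (y1 t) + 2 * (y1 t ⬝ᵥ S1.mulVec (u1 t)) + u1 t ⬝ᵥ R1.mulVec (u1 t))))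
      ≤ ∫ t in t0..t1,
      ((1/ζ1 + 1/ζ2 + max 0 (eigMax hQ1.neg)) * ((y2 t - y1 t) ⬝ᵥ (y2 t - y1 t))
      + ((1/ζ3) * l2OpNorm S1 ^ 2 + 1/ζ4 + max 0 (eigMax hR1.neg)) * ((u2 t - u1 t) ⬝ᵥ (u2 t - u1 t))
      - 2 * ((y2 t - y1 t) ⬝ᵥ S1.mulVec (u2 t - u1 t))) := by
    apply intervalIntegral.integral_mono_on ht (hi2.sub hi1) hG
    intro t _
    exact pointwise_bound hζ1 hζ2 hζ3 hζ4 (u1 t) (u2 t) (y1 t) (y2 t) S1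
      hQ1 hQ2 hR1 hR2 hQcond hRcond
  have hsub : (∫ t in t0..t1,
      ((y2 t ⬝ᵥ Q2.mulVec (y2 t) + 2 * (y2 t ⬝ᵥ S1.mulVec (u2 t)) + u2 t ⬝ᵥ R2.mulVec (u2 t))
      - (y1 t ⬝ᵥ Q1.mulVec (y1 t) + 2 * (y1 t ⬝ᵥ S1.mulVec (u1 t)) + u1 t ⬝ᵥ R1.mulVec (u1 t))))
      = (∫ t in t0..t1, y2 t ⬝ᵥ Q2.mulVec (y2 t) + 2 * (y2 t ⬝ᵥ S1.mulVec (u2 t)) +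
        u2 t ⬝ᵥ R2.mulVec (u2 t))
      - (∫ t in t0..t1, y1 t ⬝ᵥ Q1.mulVec (y1 t) + 2 * (y1 t ⬝ᵥ S1.mulVec (u1 t)) +
        u1 t ⬝ᵥ R1.mulVec (u1 t)) :=
    intervalIntegral.integral_sub hi2 hi1
  have hGval : (∫ t in t0..t1,
      ((1/ζ1 + 1/ζ2 + max 0 (eigMax hQ1.neg)) * ((y2 t - y1 t) ⬝ᵥ (y2 t - y1 t))
      + ((1/ζ3) * l2OpNorm S1 ^ 2 + 1/ζ4 + max 0 (eigMax hR1.neg)) * ((u2 t - u1 t) ⬝ᵥ (u2 t - u1 t))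
      - 2 * ((y2 t - y1 t) ⬝ᵥ S1.mulVec (u2 t - u1 t))))
      = (1/ζ1 + 1/ζ2 + max 0 (eigMax hQ1.neg)) * Iy
      + ((1/ζ3) * l2OpNorm S1 ^ 2 + 1/ζ4 + max 0 (eigMax hR1.neg)) * Iu - 2 * I5 := by
    rw [intervalIntegral.integral_sub ((hi4.const_mul _).add (hi3.const_mul _)) (hi5.const_mul 2),
      intervalIntegral.integral_add (hi4.const_mul _) (hi3.const_mul _),
      intervalIntegral.integral_const_mul, intervalIntegral.integral_const_mul,
      intervalIntegral.integral_const_mul]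
  have c2 : (1/ζ1 + 1/ζ2 + max 0 (eigMax hQ1.neg)) * Iy
      = Iy/ζ1 + Iy/ζ2 + max 0 (eigMax hQ1.neg) * Iy := by ring
  have c3 : ((1/ζ3) * l2OpNorm S1 ^ 2 + 1/ζ4 + max 0 (eigMax hR1.neg)) * Iu
      = (Iu/ζ3) * l2OpNorm S1 ^ 2 + Iu/ζ4 + max 0 (eigMax hR1.neg) * Iu := by ring
  have c4 : Iy/ζ1 ≤ εy/ζ1 := by gcongr
  have c5 : Iy/ζ2 ≤ εy/ζ2 := by gcongr
  have c6 : (Iu/ζ3) * l2OpNorm S1 ^ 2 ≤ (εu/ζ3) * l2OpNorm S1 ^ 2 := by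
    have : Iu/ζ3 ≤ εu/ζ3 := by gcongr
    exact mul_le_mul_of_nonneg_right this (sq_nonneg _)
  have c7 : Iu/ζ4 ≤ εu/ζ4 := by gcongr
  have c8 : max 0 (eigMax hQ1.neg) * Iy ≤ max 0 (eigMax hQ1.neg) * εy :=
    mul_le_mul_of_nonneg_left hy hmQ
  have c9 : max 0 (eigMax hR1.neg) * Iu ≤ max 0 (eigMax hR1.neg) * εu :=
    mul_le_mul_of_nonneg_left hu hmR
  have c10 : -(2 * I5) ≤ max 0 (-(2 * I5)) := le_max_right _ _
  rw [hsub] at hmono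
  rw [hGval] at hmono
  linarith [hmono, c2, c3, c4, c5, c6, c7, c8, c9, c10]
end

section
/- Let y : [0,τ] → ℝ^p be continuously differentiable with ∫_0^τ‖ẏ(s)‖₂² ds ≤ γ²τ‖u‖₂² for a constant u ∈ ℝ^m, and let S∈ℝ^{p×m}. Then ∫_0^τ y(t)ᵀ S u dt ≤ τ·y(0)ᵀSu + τ²γ‖S‖₂ uᵀu. -/
open MeasureTheory Matrix

/-- Euclidean norm of a finite real vector. -/
noncomputable def e2norm {n : ℕ} (v : Fin n → ℝ) : ℝ := Real.sqrt (v ⬝ᵥ v)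

lemma e2norm_eq {n : ℕ} (v : Fin n → ℝ) :
    e2norm v = ‖(WithLp.equiv 2 (Fin n → ℝ)).symm v‖ := by
  rw [EuclideanSpace.norm_eq]
  simp [e2norm, dotProduct, sq]

lemma e2norm_nonneg {n : ℕ} (v : Fin n → ℝ) : 0 ≤ e2norm v := Real.sqrt_nonneg _

lemma e2norm_sq {n : ℕ} (v : Fin n → ℝ) : e2norm v ^ 2 = v ⬝ᵥ v := by
  rw [e2norm, Real.sq_sqrt]
  exact Finset.sum_nonneg fun i _ => mul_self_nonneg _

lemma abs_dot_le {n : ℕ} (v w : Fin n → ℝ) : |v ⬝ᵥ w| ≤ e2norm v * e2norm w := by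
  have h := abs_real_inner_le_norm ((WithLp.equiv 2 (Fin n → ℝ)).symm v)
      ((WithLp.equiv 2 (Fin n → ℝ)).symm w)
  rw [e2norm_eq, e2norm_eq]
  simpa [PiLp.inner_apply, dotProduct, mul_comm] using h

lemma mulVec_e2norm_le {p q : ℕ} (Q : Matrix (Fin p) (Fin q) ℝ) (v : Fin q → ℝ) :
    e2norm (Q.mulVec v) ≤ l2OpNorm Q * e2norm v := by
  have h := (Matrix.toEuclideanLin Q).toContinuousLinearMap.le_opNorm
      ((WithLp.equiv 2 (Fin q → ℝ)).symm v)
  have he : (Matrix.toEuclideanLin Q).toContinuousLinearMap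
      ((WithLp.equiv 2 (Fin q → ℝ)).symm v)
      = (WithLp.equiv 2 (Fin p → ℝ)).symm (Q.mulVec v) := by
    simp [Matrix.toEuclideanLin_apply]
  rw [e2norm_eq, e2norm_eq, ← he]
  exact h

/-- Cauchy–Schwarz for interval integrals of a nonnegative continuous function. -/
lemma integral_cs {τ : ℝ} (hτ : 0 ≤ τ) (g : ℝ → ℝ)
    (hgc : ContinuousOn g (Set.Icc 0 τ)) (hg0 : ∀ s ∈ Set.Icc (0:ℝ) τ, 0 ≤ g s) :
    (∫ s in (0:ℝ)..τ, g s) ≤ Real.sqrt τ * Real.sqrt (∫ s in (0:ℝ)..τ, g s ^ 2) := by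
  rcases eq_or_lt_of_le hτ with h0 | h0
  · simp [← h0]
  have huIcc : Set.uIcc (0:ℝ) τ = Set.Icc 0 τ := Set.uIcc_of_le hτ
  have hgi : IntervalIntegrable g volume 0 τ :=
    (hgc.mono huIcc.subset).intervalIntegrable
  have hg2i : IntervalIntegrable (fun s => g s ^ 2) volume 0 τ :=
    ((hgc.pow 2).mono huIcc.subset).intervalIntegrable
  set A := ∫ s in (0:ℝ)..τ, g s with hA
  set B := ∫ s in (0:ℝ)..τ, g s ^ 2 with hB
  have hA0 : 0 ≤ A := intervalIntegral.integral_nonneg hτ fun s hs => hg0 s hs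
  have key : A ^ 2 ≤ τ * B := by
    set c := A / τ with hc
    have hexp : ∀ s, (g s - c) ^ 2 = g s ^ 2 - (2 * c) * g s + c ^ 2 := by
      intro s; ring
    have hint : (∫ s in (0:ℝ)..τ, (g s - c) ^ 2)
        = B - (2 * c) * A + c ^ 2 * τ := by
      simp_rw [hexp]
      rw [intervalIntegral.integral_add (hg2i.sub (hgi.const_mul _))
        intervalIntegrable_const,
        intervalIntegral.integral_sub hg2i (hgi.const_mul _),
        intervalIntegral.integral_const_mul, intervalIntegral.integral_const]
      simp [smul_eq_mul]
      ring
    have hpos : 0 ≤ ∫ s in (0:ℝ)..τ, (g s - c) ^ 2 :=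
      intervalIntegral.integral_nonneg hτ fun s _ => sq_nonneg _
    rw [hint] at hpos
    have hτne : τ ≠ 0 := ne_of_gt h0
    have h1 : c * τ = A := by rw [hc]; exact div_mul_cancel₀ A hτne
    have h2 : (0:ℝ) ≤ τ * B - (2 * c) * A * τ + c ^ 2 * τ ^ 2 := by
      nlinarith [mul_nonneg h0.le hpos]
    have h3 : c ^ 2 * τ ^ 2 = A ^ 2 := by rw [← h1]; ring
    have h4 : (2 * c) * A * τ = 2 * A ^ 2 := by
      have : (2 * c) * A * τ = 2 * A * (c * τ) := by ring
      rw [this, h1]; ring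
    linarith
  calc A = Real.sqrt (A ^ 2) := by rw [Real.sqrt_sq hA0]
    _ ≤ Real.sqrt (τ * B) := Real.sqrt_le_sqrt key
    _ = Real.sqrt τ * Real.sqrt B := Real.sqrt_mul hτ B

theorem stmt6 {p m : ℕ} (τ γ : ℝ) (hτ : 0 ≤ τ) (hγ : 0 < γ)
    (y y' : ℝ → Fin p → ℝ) (u : Fin m → ℝ) (S : Matrix (Fin p) (Fin m) ℝ)
    (hderiv : ∀ t ∈ Set.Icc (0:ℝ) τ, HasDerivAt y (y' t) t)
    (hcont : ContinuousOn y' (Set.Icc 0 τ))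
    (hrate : (∫ t in (0:ℝ)..τ, e2norm (y' t) ^ 2) ≤ γ ^ 2 * τ * e2norm u ^ 2) :
    (∫ t in (0:ℝ)..τ, y t ⬝ᵥ S.mulVec u) ≤
      τ * (y 0 ⬝ᵥ S.mulVec u) + τ ^ 2 * γ * l2OpNorm S * (u ⬝ᵥ u) := by
  set c : Fin p → ℝ := S.mulVec u with hc
  set K : ℝ := e2norm c with hK
  set f : ℝ → ℝ := fun t => y t ⬝ᵥ c with hf
  set f' : ℝ → ℝ := fun t => y' t ⬝ᵥ c with hf'
  set g : ℝ → ℝ := fun s => e2norm (y' s) with hg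
  have huIcc : Set.uIcc (0:ℝ) τ = Set.Icc 0 τ := Set.uIcc_of_le hτ
  -- derivative of f
  have hfd : ∀ t ∈ Set.Icc (0:ℝ) τ, HasDerivAt f (f' t) t := by
    intro t ht
    have h := hderiv t ht
    have : HasDerivAt (fun s => ∑ i, y s i * c i) (∑ i, y' t i * c i) t :=
      HasDerivAt.fun_sum fun i _ => (hasDerivAt_pi.1 h i).mul_const (c i)
    simpa [hf, hf', dotProduct] using this
  -- continuity of f'
  have hf'c : ContinuousOn f' (Set.Icc 0 τ) := by
    have : ∀ i : Fin p, ContinuousOn (fun s => y' s i * c i) (Set.Icc 0 τ) :=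
      fun i => (((continuous_apply i).comp_continuousOn hcont).mul continuousOn_const)
    have hsum : ContinuousOn (fun s => ∑ i, y' s i * c i) (Set.Icc 0 τ) := by
      apply continuousOn_finset_sum
      intro i _; exact this i
    simpa [hf', dotProduct] using hsum
  -- continuity of g
  have hgc : ContinuousOn g (Set.Icc 0 τ) := by
    have hdd : ContinuousOn (fun s => y' s ⬝ᵥ y' s) (Set.Icc 0 τ) := by
      apply continuousOn_finset_sum
      intro i _
      exact ((continuous_apply i).comp_continuousOn hcont).mul
        ((continuous_apply i).comp_continuousOn hcont)
    exact Real.continuous_sqrt.comp_continuousOn hdd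
  have hg0 : ∀ s ∈ Set.Icc (0:ℝ) τ, 0 ≤ g s := fun s _ => e2norm_nonneg _
  have hK0 : 0 ≤ K := e2norm_nonneg _
  have hu0 : 0 ≤ e2norm u := e2norm_nonneg _
  -- bound on ∫ g
  have hgsq : (∫ s in (0:ℝ)..τ, g s ^ 2) ≤ γ ^ 2 * τ * e2norm u ^ 2 := hrate
  have hB0 : (0:ℝ) ≤ ∫ s in (0:ℝ)..τ, g s ^ 2 :=
    intervalIntegral.integral_nonneg hτ fun s _ => sq_nonneg _
  have hgint : (∫ s in (0:ℝ)..τ, g s) ≤ Real.sqrt τ * (γ * Real.sqrt τ * e2norm u) := by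
    calc (∫ s in (0:ℝ)..τ, g s)
        ≤ Real.sqrt τ * Real.sqrt (∫ s in (0:ℝ)..τ, g s ^ 2) := integral_cs hτ g hgc hg0
      _ ≤ Real.sqrt τ * Real.sqrt (γ ^ 2 * τ * e2norm u ^ 2) := by
          gcongr
      _ = Real.sqrt τ * (γ * Real.sqrt τ * e2norm u) := by
          rw [Real.sqrt_mul (by positivity), Real.sqrt_mul (by positivity),
            Real.sqrt_sq hγ.le, Real.sqrt_sq hu0]
  have hsq : Real.sqrt τ * Real.sqrt τ = τ := Real.mul_self_sqrt hτ
  have hgint' : (∫ s in (0:ℝ)..τ, g s) ≤ τ * γ * e2norm u := by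
    calc (∫ s in (0:ℝ)..τ, g s) ≤ Real.sqrt τ * (γ * Real.sqrt τ * e2norm u) := hgint
      _ = (Real.sqrt τ * Real.sqrt τ) * γ * e2norm u := by ring
      _ = τ * γ * e2norm u := by rw [hsq]
  -- pointwise bound on f
  have hfbd : ∀ t ∈ Set.Icc (0:ℝ) τ, f t ≤ f 0 + K * (τ * γ * e2norm u) := by
    intro t ht
    obtain ⟨ht0, htτ⟩ := ht
    have hsub : Set.Icc (0:ℝ) t ⊆ Set.Icc 0 τ := Set.Icc_subset_Icc le_rfl htτ
    have huIcc' : Set.uIcc (0:ℝ) t = Set.Icc 0 t := Set.uIcc_of_le ht0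
    have hftc : (∫ s in (0:ℝ)..t, f' s) = f t - f 0 := by
      apply intervalIntegral.integral_eq_sub_of_hasDerivAt
      · intro s hs; exact hfd s (hsub (huIcc' ▸ hs))
      · exact ((hf'c.mono hsub).mono huIcc'.subset).intervalIntegrable
    have hf'int : IntervalIntegrable f' volume 0 t :=
      ((hf'c.mono hsub).mono huIcc'.subset).intervalIntegrable
    have hKgint : IntervalIntegrable (fun s => K * g s) volume 0 t :=
      (((hgc.mono hsub).const_smul K).mono huIcc'.subset).intervalIntegrable
    have hKgintτ : IntervalIntegrable (fun s => K * g s) volume 0 τ :=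
      ((hgc.const_smul K).mono huIcc.subset).intervalIntegrable
    have step1 : (∫ s in (0:ℝ)..t, f' s) ≤ ∫ s in (0:ℝ)..t, K * g s := by
      apply intervalIntegral.integral_mono_on ht0 hf'int hKgint
      intro s hs
      have := abs_dot_le (y' s) c
      calc f' s ≤ |y' s ⬝ᵥ c| := le_abs_self _
        _ ≤ e2norm (y' s) * K := this
        _ = K * g s := by rw [mul_comm]
    have step2 : (∫ s in (0:ℝ)..t, K * g s) ≤ ∫ s in (0:ℝ)..τ, K * g s := by
      apply intervalIntegral.integral_mono_interval le_rfl ht0 htτ _ hKgintτ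
      filter_upwards [ae_restrict_mem measurableSet_Ioc] with s hs
      exact mul_nonneg hK0 (e2norm_nonneg _)
    have step3 : (∫ s in (0:ℝ)..τ, K * g s) = K * ∫ s in (0:ℝ)..τ, g s :=
      intervalIntegral.integral_const_mul _ _
    have : f t - f 0 ≤ K * (τ * γ * e2norm u) := by
      rw [← hftc]
      calc (∫ s in (0:ℝ)..t, f' s) ≤ ∫ s in (0:ℝ)..τ, K * g s := step1.trans step2
        _ = K * ∫ s in (0:ℝ)..τ, g s := step3
        _ ≤ K * (τ * γ * e2norm u) := mul_le_mul_of_nonneg_left hgint' hK0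
    linarith
  -- integrate the pointwise bound
  have hfc : ContinuousOn f (Set.Icc 0 τ) := fun t ht =>
    (hfd t ht).continuousAt.continuousWithinAt
  have hfint : IntervalIntegrable f volume 0 τ :=
    (hfc.mono huIcc.subset).intervalIntegrable
  have hmain : (∫ t in (0:ℝ)..τ, f t) ≤ τ * (f 0 + K * (τ * γ * e2norm u)) := by
    calc (∫ t in (0:ℝ)..τ, f t)
        ≤ ∫ _t in (0:ℝ)..τ, (f 0 + K * (τ * γ * e2norm u)) :=
          intervalIntegral.integral_mono_on hτ hfint intervalIntegrable_const hfbd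
      _ = τ * (f 0 + K * (τ * γ * e2norm u)) := by
          rw [intervalIntegral.integral_const]
          simp [smul_eq_mul]
  -- final bound on the constant term
  have hKle : K ≤ l2OpNorm S * e2norm u := mulVec_e2norm_le S u
  have hS0 : 0 ≤ l2OpNorm S := norm_nonneg _
  have hudot : e2norm u ^ 2 = u ⬝ᵥ u := e2norm_sq u
  have hfinal : τ * (K * (τ * γ * e2norm u)) ≤ τ ^ 2 * γ * l2OpNorm S * (u ⬝ᵥ u) := by
    have h1 : K * e2norm u ≤ l2OpNorm S * (u ⬝ᵥ u) := by
      calc K * e2norm u ≤ (l2OpNorm S * e2norm u) * e2norm u :=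
            mul_le_mul_of_nonneg_right hKle hu0
        _ = l2OpNorm S * (e2norm u ^ 2) := by ring
        _ = l2OpNorm S * (u ⬝ᵥ u) := by rw [hudot]
    nlinarith [mul_nonneg (mul_nonneg hτ hτ) hγ.le, sq_nonneg τ, hτ, hγ.le,
      mul_le_mul_of_nonneg_left h1 (mul_nonneg (mul_nonneg hτ hτ) hγ.le)]
  calc (∫ t in (0:ℝ)..τ, y t ⬝ᵥ S.mulVec u)
      = ∫ t in (0:ℝ)..τ, f t := by rfl
    _ ≤ τ * (f 0 + K * (τ * γ * e2norm u)) := hmain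
    _ = τ * f 0 + τ * (K * (τ * γ * e2norm u)) := by ring
    _ ≤ τ * (y 0 ⬝ᵥ S.mulVec u) + τ ^ 2 * γ * l2OpNorm S * (u ⬝ᵥ u) := by
        have : τ * f 0 = τ * (y 0 ⬝ᵥ S.mulVec u) := rfl
        linarith [hfinal]
end

section
/- Let Σ be an incrementally forward complete system with state measurement (h_m(x,u)=x). For parameters τ,η,μ,θ₁,θ₂ > 0 and precisions ε_u,ε_y > 0 with η/2 ≤ ε_y ≤ θ₁ and μ/2 ≤ ε_u ≤ θ₂, the relation R = {(x_τ,x_q) ∈ X × [X]_η : ‖x_τ − x_q‖ ≤ η/2} is an (ε_u,ε_y)-approximate input-output simulation relation from T_τ(Σ) to T_{τ,μ,η}(Σ); i.e., T_τ(Σ) ⪯_{IOS}^{(ε_u,ε_y)} T_{τ,μ,η}(Σ). -/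
/-- A transition system: transition relation and output map. -/
structure TS (X U Y : Type*) where
  tr : X → U → X → Prop
  H : X → U → Y

/-- `R` witnesses that `T2` is an `(εu, εy)`-approximate input-output simulation of `T1`
(`T1 ⪯_{IOS}^{(εu,εy)} T2`). -/
def IOSWith {X1 X2 U1 U2 Y1 Y2 : Type*}
    (dU : U1 → U2 → ℝ) (dY : Y1 → Y2 → ℝ)
    (T1 : TS X1 U1 Y1) (T2 : TS X2 U2 Y2) (εu εy : ℝ)
    (R : Set (X1 × X2)) : Prop :=
  (∀ x1, ∃ x2, (x1, x2) ∈ R) ∧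
  ∀ x1 x2, (x1, x2) ∈ R →
    (∀ u1, (∃ x1', T1.tr x1 u1 x1') →
      ∃ u2, (∃ x2', T2.tr x2 u2 x2') ∧ dU u1 u2 ≤ εu ∧
        dY (T1.H x1 u1) (T2.H x2 u2) ≤ εy) ∧
    (∀ u1, (∃ x1', T1.tr x1 u1 x1') →
      ∃ u2, dU u1 u2 ≤ εu ∧
        ∀ x1', T1.tr x1 u1 x1' → ∃ x2', T2.tr x2 u2 x2' ∧ (x1', x2') ∈ R)

/-- `T2` is an `(εu, εy)`-approximate input-output simulation of `T1`. -/
def IOS {X1 X2 U1 U2 Y1 Y2 : Type*}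
    (dU : U1 → U2 → ℝ) (dY : Y1 → Y2 → ℝ)
    (T1 : TS X1 U1 Y1) (T2 : TS X2 U2 Y2) (εu εy : ℝ) : Prop :=
  ∃ R, IOSWith dU dY T1 T2 εu εy R

/-- `R` witnesses that `T2` is an `(εu, εy)`-approximate input-output alternating
simulation of `T1` (`T1 ⪯_{IOAS}^{(εu,εy)} T2`). -/
def IOASWith {X1 X2 U1 U2 Y1 Y2 : Type*}
    (dU : U1 → U2 → ℝ) (dY : Y1 → Y2 → ℝ)
    (T1 : TS X1 U1 Y1) (T2 : TS X2 U2 Y2) (εu εy : ℝ)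
    (R : Set (X1 × X2)) : Prop :=
  (∀ x1, ∃ x2, (x1, x2) ∈ R) ∧
  ∀ x1 x2, (x1, x2) ∈ R →
    (∀ u1, (∃ x1', T1.tr x1 u1 x1') →
      ∃ u2, (∃ x2', T2.tr x2 u2 x2') ∧ dU u1 u2 ≤ εu ∧
        dY (T1.H x1 u1) (T2.H x2 u2) ≤ εy) ∧
    (∀ u1, (∃ x1', T1.tr x1 u1 x1') →
      ∃ u2, (∃ x2', T2.tr x2 u2 x2') ∧ dU u1 u2 ≤ εu ∧
        ∀ x2', T2.tr x2 u2 x2' → ∃ x1', T1.tr x1 u1 x1' ∧ (x1', x2') ∈ R)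

/-- `T2` is an `(εu, εy)`-approximate input-output alternating simulation of `T1`. -/
def IOAS {X1 X2 U1 U2 Y1 Y2 : Type*}
    (dU : U1 → U2 → ℝ) (dY : Y1 → Y2 → ℝ)
    (T1 : TS X1 U1 Y1) (T2 : TS X2 U2 Y2) (εu εy : ℝ) : Prop :=
  ∃ R, IOASWith dU dY T1 T2 εu εy R

/-- A transition system is deterministic if every state has at most one `u`-successor. -/
def Deterministic {X U Y : Type*} (T : TS X U Y) : Prop :=
  ∀ x u x' x'', T.tr x u x' → T.tr x u x'' → x' = x''

/-- The grid of points whose coordinates are integer multiples of `η`. -/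
def grid (n : ℕ) (η : ℝ) : Set (Fin n → ℝ) := {x | ∀ i, ∃ k : ℤ, x i = k * η}

/-- Sampled transition system `T_τ(Σ)` with the state as measured output; `ξ τ x u`
is the state reached at time `τ` from `x` under the constant input `u`. -/
def Ttau {n m : ℕ} (ξ : ℝ → (Fin n → ℝ) → (Fin m → ℝ) → (Fin n → ℝ)) (τ : ℝ) :
    TS (Fin n → ℝ) (Fin m → ℝ) (Fin n → ℝ) where
  tr x u x' := x' = ξ τ x u
  H x _ := x

/-- Sampled and quantized transition system `T_{τ,μ,η}(Σ)` with the state as measured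
output, with transition tolerance `δ = α₁(θ₁,τ) + α₂(θ₂,τ) + η/2`. -/
def Tquant {n m : ℕ} (ξ : ℝ → (Fin n → ℝ) → (Fin m → ℝ) → (Fin n → ℝ))
    (τ μ η δ : ℝ) : TS (Fin n → ℝ) (Fin m → ℝ) (Fin n → ℝ) where
  tr x u x' := x ∈ grid n η ∧ u ∈ grid m μ ∧ x' ∈ grid n η ∧ ‖ξ τ x u - x'‖ ≤ δ
  H x _ := x

lemma round_grid {k : ℕ} {η : ℝ} (hη : 0 < η) (x : Fin k → ℝ) :
    ∃ q, q ∈ grid k η ∧ ‖x - q‖ ≤ η / 2 := by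
  refine ⟨fun i => (round (x i / η) : ℝ) * η, fun i => ⟨round (x i / η), rfl⟩, ?_⟩
  rw [pi_norm_le_iff_of_nonneg (by linarith)]
  intro i
  have h := abs_sub_round (x i / η)
  have he : x i - (round (x i / η) : ℝ) * η = (x i / η - round (x i / η)) * η := by
    field_simp
  simp only [Pi.sub_apply, Real.norm_eq_abs, he, abs_mul, abs_of_pos hη]
  calc |x i / η - (round (x i / η) : ℝ)| * η ≤ (1/2) * η := by
        apply mul_le_mul_of_nonneg_right h hη.le
    _ = η / 2 := by ring

theorem stmt12 {n m : ℕ}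
    (ξ : ℝ → (Fin n → ℝ) → (Fin m → ℝ) → (Fin n → ℝ))
    (α1 α2 : ℝ → ℝ → ℝ)
    -- incremental forward completeness (constant-input trajectories, sup norm)
    (hIFC : ∀ t, 0 ≤ t → ∀ (x1 x2 : Fin n → ℝ) (v1 v2 : Fin m → ℝ),
      ‖ξ t x1 v1 - ξ t x2 v2‖ ≤ α1 ‖x1 - x2‖ t + α2 ‖v1 - v2‖ t)
    -- α₁(·,t), α₂(·,t) are class K∞: monotone and vanishing at 0
    (hα1mono : ∀ t, Monotone fun s => α1 s t)
    (hα2mono : ∀ t, Monotone fun s => α2 s t)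
    (hα10 : ∀ t, α1 0 t = 0) (hα20 : ∀ t, α2 0 t = 0)
    (τ μ η θ1 θ2 εu εy : ℝ)
    (hτ : 0 < τ) (hμ : 0 < μ) (hη : 0 < η) (hθ1 : 0 < θ1) (hθ2 : 0 < θ2)
    (hεy1 : η / 2 ≤ εy) (hεy2 : εy ≤ θ1) (hεu1 : μ / 2 ≤ εu) (hεu2 : εu ≤ θ2) :
    IOSWith (fun u1 u2 => ‖u1 - u2‖) (fun y1 y2 => ‖y1 - y2‖)
      (Ttau ξ τ) (Tquant ξ τ μ η (α1 θ1 τ + α2 θ2 τ + η / 2)) εu εy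
      {q | q.2 ∈ grid n η ∧ ‖q.1 - q.2‖ ≤ η / 2} := by
  have hηle : (0:ℝ) ≤ η/2 := by linarith
  have hα1nn : 0 ≤ α1 θ1 τ := by
    have := hα1mono τ hθ1.le; simp only at this; rw [hα10 τ] at this; exact this
  have hα2nn : 0 ≤ α2 θ2 τ := by
    have := hα2mono τ hθ2.le; simp only at this; rw [hα20 τ] at this; exact this
  constructor
  · intro x1
    obtain ⟨q, hq, hqd⟩ := round_grid hη x1
    exact ⟨q, hq, hqd⟩
  · intro x1 x2 ⟨hx2g, hx12⟩
    constructor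
    · intro u1 _
      obtain ⟨u2, hu2g, hu2d⟩ := round_grid hμ u1
      obtain ⟨q, hqg, hqd⟩ := round_grid hη (ξ τ x2 u2)
      refine ⟨u2, ⟨q, hx2g, hu2g, hqg, by linarith⟩, by linarith, by
        simpa [Ttau, Tquant] using le_trans hx12 hεy1⟩
    · intro u1 _
      obtain ⟨u2, hu2g, hu2d⟩ := round_grid hμ u1
      refine ⟨u2, by linarith, ?_⟩
      intro x1' hx1'
      obtain ⟨q, hqg, hqd⟩ := round_grid hη x1'
      refine ⟨q, ⟨hx2g, hu2g, hqg, ?_⟩, hqg, hqd⟩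
      have hIFC' := hIFC τ hτ.le x2 x1 u2 u1
      have h1 : α1 ‖x2 - x1‖ τ ≤ α1 θ1 τ := by
        apply hα1mono τ
        rw [show x2 - x1 = -(x1 - x2) by ring, norm_neg]
        linarith
      have h2 : α2 ‖u2 - u1‖ τ ≤ α2 θ2 τ := by
        apply hα2mono τ
        rw [show u2 - u1 = -(u1 - u2) by ring, norm_neg]
        linarith
      have htri : ‖ξ τ x2 u2 - q‖ ≤ ‖ξ τ x2 u2 - ξ τ x1 u1‖ + ‖x1' - q‖ := by
        have : ξ τ x2 u2 - q = (ξ τ x2 u2 - ξ τ x1 u1) + (ξ τ x1 u1 - q) := by ring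
        rw [this]
        have := norm_add_le (ξ τ x2 u2 - ξ τ x1 u1) (ξ τ x1 u1 - q)
        simp only [Ttau] at hx1'
        rw [hx1']
        exact this
      linarith
end

section
/- If T₂ ⪯_{IOAS}^{(ε_u,ε_y)} T₁ (so T₂ is approximately feedback composable with T₁) and the feedback composition T₂ ×_F^{(ε_u,ε_y)} T₁ has output H₁₂ = (H₁ + H₂)/2, then T₂ ×_F^{(ε_u,ε_y)} T₁ ⪯_{IOS}^{(ε_u, ε_y/2)} T₁. -/
/-- The feedback relation `F` induced by an approximate input-output alternating
simulation relation `R` from `T2` to `T1`. -/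
def FbRel {X1 X2 U Y : Type*} (dU : U → U → ℝ) (dY : Y → Y → ℝ)
    (T1 : TS X1 U Y) (T2 : TS X2 U Y) (εu εy : ℝ) (R : Set (X2 × X1))
    (x1 : X1) (x2 : X2) (u1 u2 : U) : Prop :=
  (x2, x1) ∈ R ∧ dU u2 u1 ≤ εu ∧ dY (T2.H x2 u2) (T1.H x1 u1) ≤ εy ∧
    ∀ x1', T1.tr x1 u1 x1' → ∃ x2', T2.tr x2 u2 x2' ∧ (x2', x1') ∈ R

/-- The approximate feedback composition `T2 ×_F T1` with the averaged output
`H₁₂ = (H₁ + H₂)/2`. -/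
noncomputable def FbComp {X1 X2 U Y : Type*} [AddCommGroup Y] [Module ℝ Y]
    (T1 : TS X1 U Y) (T2 : TS X2 U Y)
    (F : X1 → X2 → U → U → Prop) : TS (X1 × X2) (U × U) Y where
  tr s uu s' := T1.tr s.1 uu.1 s'.1 ∧ T2.tr s.2 uu.2 s'.2 ∧ F s.1 s.2 uu.1 uu.2
  H s uu := (2 : ℝ)⁻¹ • (T1.H s.1 uu.1 + T2.H s.2 uu.2)

theorem stmt17 {X1 X2 U Y : Type*} [PseudoMetricSpace U]
    [NormedAddCommGroup Y] [NormedSpace ℝ Y]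
    (T1 : TS X1 U Y) (T2 : TS X2 U Y) (εu εy : ℝ) (hεu : 0 ≤ εu) (hεy : 0 ≤ εy)
    (R : Set (X2 × X1))
    -- T2 is approximately feedback composable with T1
    (hIOAS : IOASWith (fun a b => dist a b) (fun a b => ‖a - b‖) T2 T1 εu εy R) :
    IOS (fun (uu : U × U) (u : U) => dist uu.1 u) (fun a b => ‖a - b‖)
      (FbComp T1 T2 (FbRel (fun a b => dist a b) (fun a b => ‖a - b‖) T1 T2 εu εy R))
      T1 εu (εy / 2) := by
  refine ⟨{p | p.2 = p.1.1}, fun s => ⟨s.1, rfl⟩, ?_⟩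
  rintro ⟨x1, x2⟩ z (rfl : z = x1)
  constructor
  · rintro ⟨u1, u2⟩ ⟨s', h1, h2, hF⟩
    refine ⟨u1, ⟨s'.1, h1⟩, by simpa using hεu, ?_⟩
    have hy : ‖T2.H x2 u2 - T1.H z u1‖ ≤ εy := hF.2.2.1
    have key : (2:ℝ)⁻¹ • (T1.H z u1 + T2.H x2 u2) - T1.H z u1
        = (2:ℝ)⁻¹ • (T2.H x2 u2 - T1.H z u1) := by module
    show ‖(2:ℝ)⁻¹ • (T1.H z u1 + T2.H x2 u2) - T1.H z u1‖ ≤ εy / 2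
    rw [key, norm_smul]
    simp only [norm_inv, Real.norm_ofNat]
    linarith
  · rintro ⟨u1, u2⟩ ⟨s', h1, h2, hF⟩
    refine ⟨u1, by simpa using hεu, ?_⟩
    rintro t' ⟨ht1, ht2, htF⟩
    exact ⟨t'.1, ht1, rfl⟩
end
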